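/- Let F be a field and consider matrices over F(t) with the valuation ν_∞ (degree valuation at infinity) and ν₀ (order at zero). Suppose M = (a b; c d) ∈ SL₂(F[t,t⁻¹]) and n ≥ 1 is an integer such that all entries of M·diag(tⁿ, t⁻ⁿ) have ν_∞-value ≥ L and all entries of M·diag(t⁻ⁿ, tⁿ) have ν₀-value ≥ L, for some fixed L with n ≥ 1 − L. Then a = 0 and c = 0, contradicting det M = 1; hence no such M exists for n ≥ 1 − L. -/

import Mathlib

/-! A nonzero Laurent polynomial `a` satisfies `ord₀ a ≤ deg a`. For an entry `a` of the first
column of `M`, the hypotheses read `L ≤ -deg a - n` and `L ≤ ord₀ a - n ≤ deg a - n`; adding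
them gives `n ≤ -L`, which is excluded. So the first column of `M` vanishes, against
`det M = 1`. -/

open RatFunc Polynomial

/- The valuation at infinity on `F(t)`: `ν_∞(p/q) = deg q - deg p`, with `ν_∞ 0 = ⊤`. -/
open Classical in
noncomputable def nuInf {F : Type*} [Field F] (x : RatFunc F) : WithTop ℤ :=
  if x = 0 then ⊤ else (-(x.intDegree) : ℤ)

/- The valuation at zero on `F(t)`: the order of vanishing at `t = 0`, with `ν₀ 0 = ⊤`. -/
open Classical in
noncomputable def nuZero {F : Type*} [Field F] (x : RatFunc F) : WithTop ℤ :=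
  if x = 0 then ⊤
  else ((x.num.rootMultiplicity 0 : ℤ) - (x.denom.rootMultiplicity 0 : ℤ) : ℤ)

open Matrix
open scoped MatrixGroups

set_option synthInstance.maxHeartbeats 1000000

/-- The canonical embedding of the Laurent polynomial ring `F[t,t⁻¹]` into the rational
function field `F(t)`, sending `T` to `X`. -/
noncomputable def laurentToRatFunc (F : Type*) [Field F] :
    LaurentPolynomial F →ₐ[F] RatFunc F :=
  (AddMonoidAlgebra.lift F (RatFunc F) ℤ)
    ((Units.coeHom (RatFunc F)).comp
      ((zpowersHom (RatFunc F)ˣ) (Units.mk0 RatFunc.X RatFunc.X_ne_zero)))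

/-- The subgroup `SL₂(F[t,t⁻¹])` of `SL₂(F(t))`. -/
noncomputable def laurentSL2 (F : Type*) [Field F] : Subgroup (SL(2, RatFunc F)) :=
  (Matrix.SpecialLinearGroup.map (laurentToRatFunc F).toRingHom).range

/-- The diagonal matrix `diag(tᵏ, t⁻ᵏ)` over `F(t)`. -/
noncomputable def diagT (F : Type*) [Field F] (k : ℤ) :
    Matrix (Fin 2) (Fin 2) (RatFunc F) :=
  !![RatFunc.X ^ k, 0; 0, RatFunc.X ^ (-k)]

namespace RatFunc

variable {F : Type*} [Field F]

/-- The order of vanishing at `0` as an integer; it takes the junk value `0` at `x = 0`. -/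
noncomputable def ordZero (x : RatFunc F) : ℤ :=
  (x.num.rootMultiplicity 0 : ℤ) - (x.denom.rootMultiplicity 0 : ℤ)

theorem nuZero_eq_ordZero {x : RatFunc F} (hx : x ≠ 0) : nuZero x = x.ordZero := by
  rw [nuZero, if_neg hx, ordZero]

theorem nuInf_eq_neg_intDegree {x : RatFunc F} (hx : x ≠ 0) : nuInf x = (-x.intDegree : ℤ) := by
  rw [nuInf, if_neg hx]

theorem ordZero_mul {x y : RatFunc F} (hx : x ≠ 0) (hy : y ≠ 0) :
    (x * y).ordZero = x.ordZero + y.ordZero := by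
  have hden := mul_ne_zero x.denom_ne_zero y.denom_ne_zero
  have hnum := mul_ne_zero (num_ne_zero hx) (num_ne_zero hy)
  have h := congrArg (rootMultiplicity 0) (num_denom_mul x y)
  rw [rootMultiplicity_mul (mul_ne_zero (num_ne_zero (mul_ne_zero hx hy)) hden),
    rootMultiplicity_mul (mul_ne_zero hnum (x * y).denom_ne_zero),
    rootMultiplicity_mul hden, rootMultiplicity_mul hnum] at h
  simp only [ordZero]
  omega

theorem ordZero_algebraMap (p : F[X]) :
    (algebraMap F[X] (RatFunc F) p).ordZero = p.rootMultiplicity 0 := by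
  simp [ordZero, num_algebraMap, denom_algebraMap]

theorem ordZero_inv (x : RatFunc F) : x⁻¹.ordZero = -x.ordZero := by
  rcases eq_or_ne x 0 with rfl | hx
  · simp [ordZero]
  · have h := ordZero_mul hx (inv_ne_zero hx)
    rw [mul_inv_cancel₀ hx, ← map_one (algebraMap F[X] (RatFunc F)), ordZero_algebraMap,
      ← C_1, rootMultiplicity_C] at h
    omega

theorem ordZero_X_zpow (k : ℤ) : ((X : RatFunc F) ^ k).ordZero = k := by
  obtain ⟨m, rfl | rfl⟩ := k.eq_nat_or_neg
  all_goals simpa [← algebraMap_X, ← map_pow, ordZero_inv, ordZero_algebraMap]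
    using rootMultiplicity_X_sub_C_pow (0 : F) m

theorem intDegree_X_zpow (k : ℤ) : ((X : RatFunc F) ^ k).intDegree = k := by
  obtain ⟨m, rfl | rfl⟩ := k.eq_nat_or_neg
  all_goals simp [← algebraMap_X, ← map_pow]

theorem ordZero_algebraMap_le_intDegree (p : F[X]) :
    (algebraMap F[X] (RatFunc F) p).ordZero ≤ (algebraMap F[X] (RatFunc F) p).intDegree := by
  classical
  rw [ordZero_algebraMap, intDegree_polynomial, ← count_roots]
  exact_mod_cast (Multiset.count_le_card _ _).trans (card_roots' p)

end RatFunc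

section Laurent

variable {F : Type*} [Field F]

theorem laurentToRatFunc_T (k : ℤ) :
    laurentToRatFunc F (LaurentPolynomial.T k) = RatFunc.X ^ k := by
  rw [laurentToRatFunc, LaurentPolynomial.T, AddMonoidAlgebra.lift_single]
  simp

theorem laurentToRatFunc_toLaurent (p : F[X]) :
    laurentToRatFunc F (toLaurent p) = algebraMap F[X] (RatFunc F) p := by
  have h : (laurentToRatFunc F).comp toLaurentAlg = IsScalarTower.toAlgHom F F[X] (RatFunc F) :=
    algHom_ext <| by simp [toLaurent_X, laurentToRatFunc_T, RatFunc.algebraMap_X]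
  exact AlgHom.congr_fun h p

theorem ordZero_le_intDegree_laurentToRatFunc {f : LaurentPolynomial F}
    (hf : laurentToRatFunc F f ≠ 0) :
    (laurentToRatFunc F f).ordZero ≤ (laurentToRatFunc F f).intDegree := by
  obtain ⟨m, p, hp⟩ := f.exists_T_pow
  have hXm : (RatFunc.X : RatFunc F) ^ (m : ℤ) ≠ 0 := zpow_ne_zero _ RatFunc.X_ne_zero
  have hpf : algebraMap F[X] (RatFunc F) p = laurentToRatFunc F f * RatFunc.X ^ (m : ℤ) := by
    rw [← laurentToRatFunc_toLaurent, hp, map_mul, laurentToRatFunc_T]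
  have h := ordZero_algebraMap_le_intDegree p
  rw [hpf, ordZero_mul hf hXm, intDegree_mul hf hXm, ordZero_X_zpow, intDegree_X_zpow] at h
  omega

theorem eq_zero_of_le_nuInf_of_le_nuZero {a : RatFunc F}
    (ha : a ∈ Set.range (laurentToRatFunc F)) {L n : ℤ} (hn : 1 - L ≤ n)
    (hinf : (L : WithTop ℤ) ≤ nuInf (a * RatFunc.X ^ n))
    (hzero : (L : WithTop ℤ) ≤ nuZero (a * RatFunc.X ^ (-n))) : a = 0 := by
  by_contra ha0
  obtain ⟨f, rfl⟩ := ha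
  have hXn : (RatFunc.X : RatFunc F) ^ n ≠ 0 := zpow_ne_zero _ RatFunc.X_ne_zero
  have hXn' : (RatFunc.X : RatFunc F) ^ (-n) ≠ 0 := zpow_ne_zero _ RatFunc.X_ne_zero
  rw [nuInf_eq_neg_intDegree (mul_ne_zero ha0 hXn), WithTop.coe_le_coe,
    intDegree_mul ha0 hXn, intDegree_X_zpow] at hinf
  rw [nuZero_eq_ordZero (mul_ne_zero ha0 hXn'), WithTop.coe_le_coe,
    ordZero_mul ha0 hXn', ordZero_X_zpow] at hzero
  have := ordZero_le_intDegree_laurentToRatFunc ha0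
  omega

theorem mul_diagT_apply_zero (A : Matrix (Fin 2) (Fin 2) (RatFunc F)) (k : ℤ) (i : Fin 2) :
    (A * diagT F k) i 0 = A i 0 * RatFunc.X ^ k := by
  simp [diagT, Matrix.mul_apply, Fin.sum_univ_two]

end Laurent

theorem stmt_10_general {F : Type*} [Field F] (L : ℤ) (n : ℕ)
    (hn : (n : ℤ) ≥ 1 - L) :
    ¬ ∃ M ∈ laurentSL2 F,
      (∀ i j, (L : WithTop ℤ) ≤ nuInf (((M : SL(2, RatFunc F)).1 * diagT F n) i j)) ∧
      (∀ i j, (L : WithTop ℤ) ≤ nuZero (((M : SL(2, RatFunc F)).1 * diagT F (-n)) i j)) := by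
  rintro ⟨M, ⟨N, hN⟩, hinf, hzero⟩
  have hcol : ∀ i, (M : Matrix (Fin 2) (Fin 2) (RatFunc F)) i 0 = 0 := fun i =>
    eq_zero_of_le_nuInf_of_le_nuZero ⟨N i 0, by rw [← hN]; rfl⟩ hn
      (by simpa only [mul_diagT_apply_zero] using hinf i 0)
      (by simpa only [mul_diagT_apply_zero] using hzero i 0)
  have hdet := M.det_coe
  rw [Matrix.det_fin_two, hcol 0, hcol 1] at hdet
  simp at hdet

/-- There is no `M ∈ SL₂(F[t,t⁻¹])` such that all entries of `M·diag(tⁿ,t⁻ⁿ)` have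
`ν_∞`-value at least `L` and all entries of `M·diag(t⁻ⁿ,tⁿ)` have `ν₀`-value at least `L`,
once `n ≥ 1 - L` (for `n ≥ 1`): any such `M` would have `a = 0` and `c = 0`, contradicting
`det M = 1`. -/
theorem stmt_10 {F : Type*} [Field F] (L : ℤ) (n : ℕ) (hn1 : 1 ≤ n)
    (hn : (n : ℤ) ≥ 1 - L) :
    ¬ ∃ M ∈ laurentSL2 F,
      (∀ i j, (L : WithTop ℤ) ≤ nuInf (((M : SL(2, RatFunc F)).1 * diagT F n) i j)) ∧
      (∀ i j, (L : WithTop ℤ) ≤ nuZero (((M : SL(2, RatFunc F)).1 * diagT F (-n)) i j)) :=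
  stmt_10_general L n hn
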